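/- Let σ be a connected skew shape with height a and width b, and let μ be any toggle-symmetric probability distribution on J(σ). Then the expected cardinality of the antichain of maximal elements of a μ-random order ideal satisfies E_μ(#A(I)) = (ab/(a+b))·(1 + Σ_{c ∈ C(σ)} δ(c)·P_μ(c)). -/

import Mathlib

/-!
Enlarge a subshape `I` by the lattice points west of `σ` and on the two coordinate axes; this
gives a lower set of the rectangle `[0,a] × [0,b]` whose boundary is the lattice path of `I`.
Weight each lattice point `(i,j)` by the affine potential `ψ(i,j) = i/a + j/b - 1`, and sum `ψ`
over the east-to-north turns of the path minus its north-to-east turns. Each turn indicator is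
the mixed second difference of the indicator of the region, and `ψ` has vanishing mixed second
differences, so summing by parts shows that this turn sum is the same for every such region,
namely `ψ(a,b) = 1`.

Reading the turns off the skew shape: the east-to-north turns are the maximal boxes of `I` (the
boxes that can be toggled out), the northwest outward corners on the path, and the two
endpoints, where `ψ = 0`; the north-to-east turns are the northwest corners of the boxes that can
be toggled in (where `ψ` is `1/a + 1/b` less than at the box) and the southeast outward corners on
the path. Connectedness, i.e. overlapping consecutive rows, rules out any other turn. Taking
`μ`-expectations, toggle-symmetry cancels the `ψ`-weighted toggle terms, leaving
`(1/a + 1/b) · E_μ(#A(I)) = 1 + Σ_c δ(c) P_μ(c)`.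
-/

open Finset
open scoped Classical

noncomputable section

/-- A skew Young diagram `λ/ν` (in English notation) with height `a` and width `b`.
Rows are indexed `1,…,a` from top to bottom and columns `1,…,b` from left to right;
row `i` consists of the boxes in columns `ν i + 1, …, λ i` (each row is nonempty).
Box `[i,j]` has its southeast corner at the lattice point `(i,j)`, the point `(0,0)`
being the northwest corner of the bounding `a × b` rectangle. -/
structure SkewShape where
  a : ℕ
  b : ℕ
  ha : 1 ≤ a
  hb : 1 ≤ b
  lam : ℕ → ℕ
  nu : ℕ → ℕ
  lam_anti : ∀ i j : ℕ, 1 ≤ i → i ≤ j → j ≤ a → lam j ≤ lam i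
  nu_anti : ∀ i j : ℕ, 1 ≤ i → i ≤ j → j ≤ a → nu j ≤ nu i
  nu_lt_lam : ∀ i : ℕ, 1 ≤ i → i ≤ a → nu i < lam i
  lam_le_b : ∀ i : ℕ, 1 ≤ i → i ≤ a → lam i ≤ b
  lam_one : lam 1 = b
  nu_a : nu a = 0

namespace SkewShape

variable (σ : SkewShape)

/-- The boxes of `σ` : pairs `[i,j]` with `1 ≤ i ≤ a` and `ν i < j ≤ λ i`.
The poset `P_σ` is the set of boxes ordered componentwise:
`[i,j] ≤ [k,l]` iff `i ≤ k` and `j ≤ l` (the product order on `ℕ × ℕ`). -/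
def cells : Finset (ℕ × ℕ) :=
  (Finset.Icc 1 σ.a ×ˢ Finset.Icc 1 σ.b).filter
    (fun c => σ.nu c.1 < c.2 ∧ c.2 ≤ σ.lam c.1)

/-- The poset `P_σ` of boxes of `σ` is connected: it is nonempty, and any two boxes are
joined by a walk along comparable pairs of boxes. -/
def Connected : Prop :=
  σ.cells.Nonempty ∧ ∀ p ∈ σ.cells, ∀ q ∈ σ.cells,
    Relation.ReflTransGen
      (fun x y : ℕ × ℕ => x ∈ σ.cells ∧ y ∈ σ.cells ∧ (x ≤ y ∨ y ≤ x)) p q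

/-- `I` is an order ideal of `P_σ`, i.e. a subshape of `σ`. -/
def IsIdeal (I : Finset (ℕ × ℕ)) : Prop :=
  I ⊆ σ.cells ∧ ∀ p ∈ I, ∀ q ∈ σ.cells, q ≤ p → q ∈ I

/-- The set `J(σ)` of all order ideals of `P_σ` (equivalently, subshapes of `σ`). -/
def idealsFinset : Finset (Finset (ℕ × ℕ)) :=
  σ.cells.powerset.filter fun I => σ.IsIdeal I

/-- Box `p` can be toggled in to the order ideal `I`. -/
def CanToggleIn (I : Finset (ℕ × ℕ)) (p : ℕ × ℕ) : Prop :=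
  p ∈ σ.cells ∧ p ∉ I ∧ σ.IsIdeal (insert p I)

/-- Box `p` can be toggled out of the order ideal `I`. -/
def CanToggleOut (I : Finset (ℕ × ℕ)) (p : ℕ × ℕ) : Prop :=
  p ∈ I ∧ σ.IsIdeal (I.erase p)

/-- The jaggedness of `I`: the number of boxes that can be toggled in,
plus the number of boxes that can be toggled out. -/
def jag (I : Finset (ℕ × ℕ)) : ℕ :=
  (σ.cells.filter fun p => σ.CanToggleIn I p).card +
  (σ.cells.filter fun p => σ.CanToggleOut I p).card

/-- The probability, under `μ`, that a random order ideal of `P_σ` satisfies `E`. -/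
def pr (μ : Finset (ℕ × ℕ) → ℝ) (E : Finset (ℕ × ℕ) → Prop) : ℝ :=
  ∑ I ∈ σ.idealsFinset.filter E, μ I

/-- `μ` is a probability distribution on `J(σ)`. -/
def IsProbDist (μ : Finset (ℕ × ℕ) → ℝ) : Prop :=
  (∀ I, 0 ≤ μ I) ∧ (∑ I ∈ σ.idealsFinset, μ I = 1)

/-- `μ` is toggle-symmetric: for every box `p` of `σ`, the probability that `p` can be
toggled in equals the probability that `p` can be toggled out. -/
def ToggleSymmetric (μ : Finset (ℕ × ℕ) → ℝ) : Prop :=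
  ∀ p ∈ σ.cells,
    σ.pr μ (fun I => σ.CanToggleIn I p) = σ.pr μ (fun I => σ.CanToggleOut I p)

/-- The expectation of the statistic `f` with respect to `μ`. -/
def expect (μ : Finset (ℕ × ℕ) → ℝ) (f : Finset (ℕ × ℕ) → ℝ) : ℝ :=
  ∑ I ∈ σ.idealsFinset, μ I * f I

/-- `c` is a northwest outward corner of `σ`, occurring at the lattice point `c = (i,j)`:
the northwest boundary of `σ` turns at `(i,j)` with its two steps
(the top edge of box `[i+1,j]` and the left edge of box `[i,j+1]`)
not bordering a common box of `σ`. -/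
def IsNWCorner (c : ℕ × ℕ) : Prop :=
  (c.1 + 1, c.2) ∈ σ.cells ∧ (c.1, c.2 + 1) ∈ σ.cells ∧ (c.1, c.2) ∉ σ.cells

/-- `c` is a southeast outward corner of `σ`, occurring at the lattice point `c = (i,j)`:
the southeast boundary of `σ` turns at `(i,j)` with its two steps
(the right edge of box `[i+1,j]` and the bottom edge of box `[i,j+1]`)
not bordering a common box of `σ`. -/
def IsSECorner (c : ℕ × ℕ) : Prop :=
  (c.1 + 1, c.2) ∈ σ.cells ∧ (c.1, c.2 + 1) ∈ σ.cells ∧ (c.1 + 1, c.2 + 1) ∉ σ.cells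

/-- The set of northwest outward corners of `σ`. -/
def nwCorners : Finset (ℕ × ℕ) :=
  (Finset.range (σ.a + 1) ×ˢ Finset.range (σ.b + 1)).filter fun c => σ.IsNWCorner c

/-- The set of southeast outward corners of `σ`.
(Together, `nwCorners` and `seCorners` form the set `C(σ)` of outward corners.) -/
def seCorners : Finset (ℕ × ℕ) :=
  (Finset.range (σ.a + 1) ×ˢ Finset.range (σ.b + 1)).filter fun c => σ.IsSECorner c

/-- The displacement `δ(c) = 1 − i/a − j/b` of a northwest corner occurring at `(i,j)`. -/
def nwDisp (c : ℕ × ℕ) : ℝ := 1 - (c.1 : ℝ) / (σ.a : ℝ) - (c.2 : ℝ) / (σ.b : ℝ)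

/-- The displacement `δ(c) = −1 + i/a + j/b` of a southeast corner occurring at `(i,j)`. -/
def seDisp (c : ℕ × ℕ) : ℝ := -1 + (c.1 : ℝ) / (σ.a : ℝ) + (c.2 : ℝ) / (σ.b : ℝ)

/-- The lattice path of the subshape `I` includes both steps of the northwest corner at
`c = (i,j)`: neither box `[i+1,j]` nor box `[i,j+1]` belongs to `I`. -/
def NWInPath (c : ℕ × ℕ) (I : Finset (ℕ × ℕ)) : Prop :=
  (c.1 + 1, c.2) ∉ I ∧ (c.1, c.2 + 1) ∉ I

/-- The lattice path of the subshape `I` includes both steps of the southeast corner at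
`c = (i,j)`: both boxes `[i+1,j]` and `[i,j+1]` belong to `I`. -/
def SEInPath (c : ℕ × ℕ) (I : Finset (ℕ × ℕ)) : Prop :=
  (c.1 + 1, c.2) ∈ I ∧ (c.1, c.2 + 1) ∈ I

/-- The correction term `Σ_{c ∈ C(σ)} δ(c) · P_μ(c)`, where `P_μ(c)` is the
`μ`-probability that the lattice path of a random subshape includes both steps of `c`. -/
def cornerCorrection (μ : Finset (ℕ × ℕ) → ℝ) : ℝ :=
  (∑ c ∈ σ.nwCorners, σ.nwDisp c * σ.pr μ (NWInPath c)) +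
  (∑ c ∈ σ.seCorners, σ.seDisp c * σ.pr μ (SEInPath c))

end SkewShape

namespace SkewShape

/-- The cardinality of the antichain `A(I)` of maximal elements of `I`
(with respect to the componentwise order on boxes). -/
def antichainCard (I : Finset (ℕ × ℕ)) : ℕ :=
  (I.filter fun p => ∀ q ∈ I, p ≤ q → q = p).card

end SkewShape

namespace LatticePath

/-- The boundary of a lower set `R ⊆ ℕ × ℕ`, traversed with east steps (increasing the second
coordinate) and north steps (decreasing the first), turns from east to north at the maximal
points of `R`; `IsNETurn R t` says that it turns from north to east at `t`. -/
def IsENTurn (R : Finset (ℕ × ℕ)) (t : ℕ × ℕ) : Prop :=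
  t ∈ R ∧ (t.1 + 1, t.2) ∉ R ∧ (t.1, t.2 + 1) ∉ R

def IsNETurn (R : Finset (ℕ × ℕ)) (t : ℕ × ℕ) : Prop :=
  (t.1 + 1, t.2) ∈ R ∧ (t.1, t.2 + 1) ∈ R ∧ (t.1 + 1, t.2 + 1) ∉ R

def turnSum (a b : ℕ) (ψ : ℕ × ℕ → ℝ) (R : Finset (ℕ × ℕ)) : ℝ :=
  ∑ t ∈ range (a + 1) ×ˢ range (b + 1),
    ψ t * ((if IsENTurn R t then 1 else 0) - (if IsNETurn R t then 1 else 0))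

def mixedDiffSum (a b : ℕ) (ψ : ℕ × ℕ → ℝ) (S : Finset (ℕ × ℕ)) : ℝ :=
  ∑ t ∈ range (a + 1) ×ˢ range (b + 1), ψ t *
    ((if t ∈ S then 1 else 0) - (if (t.1 + 1, t.2) ∈ S then 1 else 0)
      - (if (t.1, t.2 + 1) ∈ S then 1 else 0) + (if (t.1 + 1, t.2 + 1) ∈ S then 1 else 0))

variable {a b : ℕ} {ψ : ℕ × ℕ → ℝ}

lemma turnIndicator_eq_mixedDiff {R : Finset (ℕ × ℕ)} (hR : IsLowerSet (R : Set (ℕ × ℕ)))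
    (t : ℕ × ℕ) :
    ((if IsENTurn R t then 1 else 0) - (if IsNETurn R t then 1 else 0) : ℝ) =
      (if t ∈ R then 1 else 0) - (if (t.1 + 1, t.2) ∈ R then 1 else 0)
        - (if (t.1, t.2 + 1) ∈ R then 1 else 0) + (if (t.1 + 1, t.2 + 1) ∈ R then 1 else 0) := by
  have hR' : ∀ {s u : ℕ × ℕ}, s ≤ u → u ∈ R → s ∈ R := fun h hu => hR h hu
  have h1 : (t.1 + 1, t.2) ∈ R → t ∈ R := hR' (by simp [Prod.le_def])
  have h2 : (t.1, t.2 + 1) ∈ R → t ∈ R := hR' (by simp [Prod.le_def])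
  have h3 : (t.1 + 1, t.2 + 1) ∈ R → (t.1 + 1, t.2) ∈ R := hR' (by simp [Prod.le_def])
  have h4 : (t.1 + 1, t.2 + 1) ∈ R → (t.1, t.2 + 1) ∈ R := hR' (by simp [Prod.le_def])
  unfold IsENTurn IsNETurn
  by_cases t ∈ R <;> by_cases (t.1 + 1, t.2) ∈ R <;> by_cases (t.1, t.2 + 1) ∈ R <;>
    by_cases (t.1 + 1, t.2 + 1) ∈ R <;> simp_all

lemma turnSum_eq_mixedDiffSum {R : Finset (ℕ × ℕ)} (hR : IsLowerSet (R : Set (ℕ × ℕ))) :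
    turnSum a b ψ R = mixedDiffSum a b ψ R := by
  simp only [turnSum, mixedDiffSum, turnIndicator_eq_mixedDiff hR]

lemma mixedDiffSum_union {R S : Finset (ℕ × ℕ)} (h : Disjoint R S) :
    mixedDiffSum a b ψ (R ∪ S) = mixedDiffSum a b ψ R + mixedDiffSum a b ψ S := by
  have hχ : ∀ x, (if x ∈ R ∪ S then 1 else 0 : ℝ) =
      (if x ∈ R then 1 else 0) + (if x ∈ S then 1 else 0) := by
    intro x
    by_cases hx : x ∈ R
    · simp [hx, Finset.disjoint_left.mp h hx]
    · simp [hx]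
  simp only [mixedDiffSum, hχ, ← sum_add_distrib]
  exact sum_congr rfl fun t _ => by ring

lemma mixedDiffSum_singleton
    (hψ : ∀ i j, ψ (i + 1, j + 1) - ψ (i + 1, j) - ψ (i, j + 1) + ψ (i, j) = 0)
    {i j : ℕ} (hi : i < a) (hj : j < b) :
    mixedDiffSum a b ψ {(i + 1, j + 1)} = 0 := by
  have e1 : ∀ t : ℕ × ℕ, (t.1 + 1, t.2) = (i + 1, j + 1) ↔ t = (i, j + 1) := by
    simp [Prod.ext_iff]
  have e2 : ∀ t : ℕ × ℕ, (t.1, t.2 + 1) = (i + 1, j + 1) ↔ t = (i + 1, j) := by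
    simp [Prod.ext_iff]
  have e3 : ∀ t : ℕ × ℕ, (t.1 + 1, t.2 + 1) = (i + 1, j + 1) ↔ t = (i, j) := by
    simp [Prod.ext_iff]
  simp only [mixedDiffSum, mem_singleton, e1, e2, e3, mul_add, mul_sub, mul_ite, mul_one, mul_zero,
    sum_add_distrib, sum_sub_distrib, sum_ite_eq', mem_product, mem_range]
  simp only [show i + 1 < a + 1 by omega, show j + 1 < b + 1 by omega, show i < a + 1 by omega,
    show j < b + 1 by omega, and_self, if_true]
  linarith [hψ i j]

lemma mixedDiffSum_eq_zero
    (hψ : ∀ i j, ψ (i + 1, j + 1) - ψ (i + 1, j) - ψ (i, j + 1) + ψ (i, j) = 0)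
    {S : Finset (ℕ × ℕ)} (hS : ∀ s ∈ S, 1 ≤ s.1 ∧ s.1 ≤ a ∧ 1 ≤ s.2 ∧ s.2 ≤ b) :
    mixedDiffSum a b ψ S = 0 := by
  induction S using Finset.induction_on with
  | empty => simp [mixedDiffSum]
  | insert s S hs ih =>
    obtain ⟨h1, h2, h3, h4⟩ := hS s (mem_insert_self s S)
    obtain ⟨⟨i, j⟩, rfl⟩ : ∃ p : ℕ × ℕ, s = (p.1 + 1, p.2 + 1) :=
      ⟨(s.1 - 1, s.2 - 1), by ext <;> simp <;> omega⟩
    dsimp only at h2 h4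
    rw [insert_eq, mixedDiffSum_union (disjoint_singleton_left.mpr hs),
      mixedDiffSum_singleton hψ (by omega) (by omega),
      ih fun s h => hS s (mem_insert_of_mem h), add_zero]

lemma turnSum_rectangle : turnSum a b ψ (range (a + 1) ×ˢ range (b + 1)) = ψ (a, b) := by
  have hEN : ∀ t ∈ range (a + 1) ×ˢ range (b + 1),
      IsENTurn (range (a + 1) ×ˢ range (b + 1)) t ↔ t = (a, b) := by
    rintro ⟨x, y⟩ h
    simp only [mem_product, mem_range] at h
    simp only [IsENTurn, mem_product, mem_range, Prod.ext_iff]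
    omega
  have hNE : ∀ t, ¬ IsNETurn (range (a + 1) ×ˢ range (b + 1)) t := by
    rintro ⟨x, y⟩
    simp only [IsNETurn, mem_product, mem_range]
    omega
  rw [turnSum, sum_congr rfl fun t ht => by rw [if_congr (hEN t ht) rfl rfl, if_neg (hNE t)]]
  simp

theorem turnSum_eq (hψ : ∀ i j, ψ (i + 1, j + 1) - ψ (i + 1, j) - ψ (i, j + 1) + ψ (i, j) = 0)
    {R : Finset (ℕ × ℕ)} (hR : IsLowerSet (R : Set (ℕ × ℕ)))
    (hRab : R ⊆ range (a + 1) ×ˢ range (b + 1)) (ha : (a, 0) ∈ R) (hb : (0, b) ∈ R) :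
    turnSum a b ψ R = ψ (a, b) := by
  have hrect : IsLowerSet ((range (a + 1) ×ˢ range (b + 1) : Finset (ℕ × ℕ)) : Set (ℕ × ℕ)) := by
    intro s t hts hs
    simp only [coe_product, coe_range, Set.mem_prod, Set.mem_Iio] at hs ⊢
    exact ⟨by have := hts.1; omega, by have := hts.2; omega⟩
  have hcompl : ∀ s ∈ (range (a + 1) ×ˢ range (b + 1)) \ R,
      1 ≤ s.1 ∧ s.1 ≤ a ∧ 1 ≤ s.2 ∧ s.2 ≤ b := by
    rintro ⟨x, y⟩ hs
    simp only [mem_sdiff, mem_product, mem_range] at hs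
    have hx : x ≠ 0 := by
      rintro rfl
      exact hs.2 (hR (show (0, y) ≤ (0, b) from ⟨le_rfl, by simp; omega⟩) hb)
    have hy : y ≠ 0 := by
      rintro rfl
      exact hs.2 (hR (show (x, 0) ≤ (a, 0) from ⟨by simp; omega, le_rfl⟩) ha)
    omega
  rw [← turnSum_rectangle (ψ := ψ), turnSum_eq_mixedDiffSum hR, turnSum_eq_mixedDiffSum hrect,
    ← union_sdiff_of_subset hRab, mixedDiffSum_union disjoint_sdiff,
    mixedDiffSum_eq_zero hψ hcompl, add_zero]

end LatticePath

namespace SkewShape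

variable (σ : SkewShape)

lemma mem_cells {p : ℕ × ℕ} : p ∈ σ.cells ↔
    1 ≤ p.1 ∧ p.1 ≤ σ.a ∧ 1 ≤ p.2 ∧ p.2 ≤ σ.b ∧ σ.nu p.1 < p.2 ∧ p.2 ≤ σ.lam p.1 := by
  simp only [cells, mem_filter, mem_product, mem_Icc]
  tauto

lemma cells_subset_grid : σ.cells ⊆ range (σ.a + 1) ×ˢ range (σ.b + 1) := by
  intro p hp
  have := σ.mem_cells.mp hp
  simp only [mem_product, mem_range]
  omega

lemma mem_idealsFinset {I : Finset (ℕ × ℕ)} : I ∈ σ.idealsFinset ↔ σ.IsIdeal I :=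
  ⟨fun h => (mem_filter.mp h).2, fun h => mem_filter.mpr ⟨mem_powerset.mpr h.1, h⟩⟩

lemma nu_lt_lam_succ (hconn : σ.Connected) {i : ℕ} (hi : 1 ≤ i) (hia : i + 1 ≤ σ.a) :
    σ.nu i < σ.lam (i + 1) := by
  by_contra! hcon
  have hp : (i, σ.nu i + 1) ∈ σ.cells := by
    have := σ.nu_lt_lam i hi (by omega)
    have := σ.lam_le_b i hi (by omega)
    rw [mem_cells]; dsimp only; omega
  have hq : (i + 1, σ.nu (i + 1) + 1) ∈ σ.cells := by
    have := σ.nu_lt_lam (i + 1) (by omega) hia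
    have := σ.lam_le_b (i + 1) (by omega) hia
    rw [mem_cells]; dsimp only; omega
  -- a comparable pair of cells never crosses from rows `≤ i` to rows `> i`
  have hrows : ∀ y, Relation.ReflTransGen
      (fun x y : ℕ × ℕ => x ∈ σ.cells ∧ y ∈ σ.cells ∧ (x ≤ y ∨ y ≤ x)) (i, σ.nu i + 1) y →
      y.1 ≤ i := by
    intro y hy
    induction hy with
    | refl => exact le_rfl
    | @tail c d _ hrel ih =>
      obtain ⟨hc, hd, hle | hle⟩ := hrel
      · by_contra! hd1
        have := σ.mem_cells.mp hc
        have := σ.mem_cells.mp hd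
        have := σ.lam_anti (i + 1) d.1 (by omega) hd1 (by omega)
        have := σ.nu_anti c.1 i (by omega) ih (by omega)
        have := hle.2
        omega
      · exact hle.1.trans ih
  have := hrows _ (hconn.2 _ hp _ hq)
  simp at this

def potential (t : ℕ × ℕ) : ℝ := (t.1 : ℝ) / σ.a + (t.2 : ℝ) / σ.b - 1

lemma potential_mixedDiff (i j : ℕ) :
    σ.potential (i + 1, j + 1) - σ.potential (i + 1, j) - σ.potential (i, j + 1)
      + σ.potential (i, j) = 0 := by
  simp only [potential]
  push_cast
  ring

lemma potential_a_b : σ.potential (σ.a, σ.b) = 1 := by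
  have ha : (σ.a : ℝ) ≠ 0 := Nat.cast_ne_zero.mpr (by have := σ.ha; omega)
  have hb : (σ.b : ℝ) ≠ 0 := Nat.cast_ne_zero.mpr (by have := σ.hb; omega)
  simp only [potential, div_self ha, div_self hb]
  norm_num

lemma potential_a_zero : σ.potential (σ.a, 0) = 0 := by
  have ha : (σ.a : ℝ) ≠ 0 := Nat.cast_ne_zero.mpr (by have := σ.ha; omega)
  simp [potential, div_self ha]

lemma potential_zero_b : σ.potential (0, σ.b) = 0 := by
  have hb : (σ.b : ℝ) ≠ 0 := Nat.cast_ne_zero.mpr (by have := σ.hb; omega)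
  simp [potential, div_self hb]

lemma potential_succ_succ (t : ℕ × ℕ) :
    σ.potential (t.1 + 1, t.2 + 1) = σ.potential t + (1 / σ.a + 1 / σ.b) := by
  simp only [potential]
  push_cast
  ring

/-- The lattice points weakly northwest of the lattice path of the subshape `I`: the box
`[i,j]` (identified with its southeast corner) lies in this region iff it is in `I` or lies
west of `σ`, and the two boundary lines `i = 0`, `j = 0` of the rectangle are added so
that the region is a lower set of the rectangle containing `(a,0)` and `(0,b)`. -/
def region (I : Finset (ℕ × ℕ)) : Finset (ℕ × ℕ) :=
  (range (σ.a + 1) ×ˢ range (σ.b + 1)).filter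
    (fun t => t.1 = 0 ∨ t.2 = 0 ∨ t.2 ≤ σ.nu t.1 ∨ t ∈ I)

lemma mem_region {I : Finset (ℕ × ℕ)} {t : ℕ × ℕ} : t ∈ σ.region I ↔
    t.1 ≤ σ.a ∧ t.2 ≤ σ.b ∧ (t.1 = 0 ∨ t.2 = 0 ∨ t.2 ≤ σ.nu t.1 ∨ t ∈ I) := by
  simp only [region, mem_filter, mem_product, mem_range, Nat.lt_succ_iff, and_assoc]

lemma mem_region_iff_mem {I : Finset (ℕ × ℕ)} (hI : σ.IsIdeal I) {t : ℕ × ℕ} (h1 : 1 ≤ t.1)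
    (hν : t.1 ≤ σ.a → σ.nu t.1 < t.2) : t ∈ σ.region I ↔ t ∈ I := by
  rw [mem_region]
  constructor
  · rintro ⟨ha, -, h⟩
    have := hν ha
    exact ((h.resolve_left (by omega)).resolve_left (by omega)).resolve_left (by omega)
  · intro h
    have := σ.mem_cells.mp (hI.1 h)
    exact ⟨by omega, by omega, Or.inr (Or.inr (Or.inr h))⟩

lemma mem_region_iff_mem_of_mem_cells {I : Finset (ℕ × ℕ)} (hI : σ.IsIdeal I) {p : ℕ × ℕ}
    (hp : p ∈ σ.cells) : p ∈ σ.region I ↔ p ∈ I :=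
  have hpc := σ.mem_cells.mp hp
  σ.mem_region_iff_mem hI hpc.1 fun _ => hpc.2.2.2.2.1

lemma mem_region_iff_imp {I : Finset (ℕ × ℕ)} {t : ℕ × ℕ} (ha : t.1 ≤ σ.a) (hb : t.2 ≤ σ.b)
    (hlam : t.1 = 0 ∨ t.2 ≤ σ.lam t.1) : t ∈ σ.region I ↔ (t ∈ σ.cells → t ∈ I) := by
  rw [mem_region, mem_cells]
  by_cases h : t.1 = 0 ∨ t.2 = 0 ∨ t.2 ≤ σ.nu t.1
  · have : ¬ (1 ≤ t.1 ∧ t.1 ≤ σ.a ∧ 1 ≤ t.2 ∧ t.2 ≤ σ.b ∧ σ.nu t.1 < t.2 ∧ t.2 ≤ σ.lam t.1) := by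
      omega
    tauto
  · have : 1 ≤ t.1 ∧ t.1 ≤ σ.a ∧ 1 ≤ t.2 ∧ t.2 ≤ σ.b ∧ σ.nu t.1 < t.2 ∧ t.2 ≤ σ.lam t.1 := by
      omega
    tauto

lemma isLowerSet_region {I : Finset (ℕ × ℕ)} (hI : σ.IsIdeal I) :
    IsLowerSet (σ.region I : Set (ℕ × ℕ)) := by
  intro t s hst ht
  obtain ⟨h1, h2⟩ := hst
  simp only [mem_coe, mem_region] at ht ⊢
  obtain ⟨hta, htb, hc⟩ := ht
  refine ⟨by omega, by omega, ?_⟩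
  by_cases hs1 : s.1 = 0
  · exact Or.inl hs1
  by_cases hs2 : s.2 = 0
  · exact Or.inr (Or.inl hs2)
  by_cases hnu : s.2 ≤ σ.nu s.1
  · exact Or.inr (Or.inr (Or.inl hnu))
  refine Or.inr (Or.inr (Or.inr ?_))
  have hνs := σ.nu_anti s.1 t.1 (by omega) h1 hta
  rcases hc with h | h | h | h
  · omega
  · omega
  · omega
  · have := σ.mem_cells.mp (hI.1 h)
    have := σ.lam_anti s.1 t.1 (by omega) h1 hta
    exact hI.2 t h s (σ.mem_cells.mpr (by omega)) ⟨h1, h2⟩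

lemma turnSum_region {I : Finset (ℕ × ℕ)} (hI : σ.IsIdeal I) :
    LatticePath.turnSum σ.a σ.b σ.potential (σ.region I) = 1 := by
  rw [LatticePath.turnSum_eq σ.potential_mixedDiff (σ.isLowerSet_region hI) (filter_subset _ _)
    (σ.mem_region.mpr ⟨le_rfl, by omega, Or.inr (Or.inl rfl)⟩)
    (σ.mem_region.mpr ⟨by omega, le_rfl, Or.inl rfl⟩), σ.potential_a_b]

lemma upperCover_mem_cells_of_lt {p z : ℕ × ℕ} (hp : p ∈ σ.cells) (hz : z ∈ σ.cells)
    (hpz : p < z) :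
    ((p.1 + 1, p.2) ∈ σ.cells ∧ (p.1 + 1, p.2) ≤ z) ∨
      ((p.1, p.2 + 1) ∈ σ.cells ∧ (p.1, p.2 + 1) ≤ z) := by
  rw [mem_cells] at hp hz
  rw [Prod.lt_iff] at hpz
  simp only [mem_cells, Prod.le_def]
  by_cases h : p.1 < z.1
  · have := σ.nu_anti p.1 (p.1 + 1) hp.1 (by omega) (by omega)
    have := σ.lam_anti (p.1 + 1) z.1 (by omega) (by omega) hz.2.1
    omega
  · have hrow : p.1 = z.1 := by omega
    have := congrArg σ.lam hrow
    omega

lemma lowerCover_mem_cells_of_lt {r : ℕ × ℕ} {x y : ℕ} (hr : r ∈ σ.cells)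
    (hq : (x + 1, y + 1) ∈ σ.cells) (hrq : r < (x + 1, y + 1)) :
    ((x, y + 1) ∈ σ.cells ∧ r ≤ (x, y + 1)) ∨ ((x + 1, y) ∈ σ.cells ∧ r ≤ (x + 1, y)) := by
  rw [mem_cells] at hr hq
  rw [Prod.lt_iff] at hrq
  dsimp only at hq hrq
  simp only [mem_cells, Prod.le_def]
  by_cases h : r.2 ≤ y
  · have := σ.nu_anti r.1 (x + 1) hr.1 (by omega) hq.2.1
    omega
  · have := σ.nu_anti r.1 x hr.1 (by omega) (by omega)
    have := σ.lam_anti x (x + 1) (by omega) (by omega) hq.2.1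
    omega

lemma canToggleOut_iff {I : Finset (ℕ × ℕ)} (hI : σ.IsIdeal I) {p : ℕ × ℕ} :
    σ.CanToggleOut I p ↔ p ∈ I ∧ ∀ q ∈ I, p ≤ q → q = p := by
  constructor
  · rintro ⟨hp, hI'⟩
    refine ⟨hp, fun q hq hpq => by_contra fun hne => ?_⟩
    exact notMem_erase p I (hI'.2 q (mem_erase.mpr ⟨hne, hq⟩) p (hI.1 hp) hpq)
  · rintro ⟨hp, hmax⟩
    refine ⟨hp, (erase_subset p I).trans hI.1, fun x hx q hq hqx => ?_⟩
    refine mem_erase.mpr ⟨?_, hI.2 x (mem_of_mem_erase hx) q hq hqx⟩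
    rintro rfl
    exact ne_of_mem_erase hx (hmax x (mem_of_mem_erase hx) hqx)

lemma maximal_iff {I : Finset (ℕ × ℕ)} (hI : σ.IsIdeal I) {p : ℕ × ℕ} (hp : p ∈ I) :
    (∀ q ∈ I, p ≤ q → q = p) ↔ (p.1 + 1, p.2) ∉ I ∧ (p.1, p.2 + 1) ∉ I := by
  constructor
  · intro hmax
    constructor
    · intro h
      simpa using congrArg Prod.fst (hmax _ h (by simp [Prod.le_def]))
    · intro h
      simpa using congrArg Prod.snd (hmax _ h (by simp [Prod.le_def]))
  · rintro ⟨h1, h2⟩ q hq hpq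
    by_contra hne
    rcases σ.upperCover_mem_cells_of_lt (hI.1 hp) (hI.1 hq) (lt_of_le_of_ne hpq (Ne.symm hne))
      with ⟨hc, hle⟩ | ⟨hc, hle⟩
    · exact h1 (hI.2 q hq _ hc hle)
    · exact h2 (hI.2 q hq _ hc hle)

lemma canToggleIn_iff {I : Finset (ℕ × ℕ)} (hI : σ.IsIdeal I) {x y : ℕ}
    (hq : (x + 1, y + 1) ∈ σ.cells) :
    σ.CanToggleIn I (x + 1, y + 1) ↔ (x + 1, y + 1) ∉ I ∧
      ((x, y + 1) ∈ σ.cells → (x, y + 1) ∈ I) ∧ ((x + 1, y) ∈ σ.cells → (x + 1, y) ∈ I) := by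
  constructor
  · rintro ⟨-, hnotin, hins⟩
    have below : ∀ r ∈ σ.cells, r ≤ (x + 1, y + 1) → r ≠ (x + 1, y + 1) → r ∈ I :=
      fun r hr hle hne => (mem_insert.mp (hins.2 _ (mem_insert_self _ _) r hr hle)).resolve_left hne
    refine ⟨hnotin, fun h => below _ h (by simp [Prod.le_def]) (by simp),
      fun h => below _ h (by simp [Prod.le_def]) (by simp)⟩
  · rintro ⟨hnotin, h1, h2⟩
    refine ⟨hq, hnotin, insert_subset hq hI.1, fun z hz r hr hrz => ?_⟩
    rcases mem_insert.mp hz with rfl | hz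
    · by_cases hrq : r = (x + 1, y + 1)
      · exact hrq ▸ mem_insert_self _ _
      refine mem_insert_of_mem ?_
      rcases σ.lowerCover_mem_cells_of_lt hr hq (lt_of_le_of_ne hrz hrq)
        with ⟨hc, hle⟩ | ⟨hc, hle⟩
      · exact hI.2 _ (h1 hc) r hr hle
      · exact hI.2 _ (h2 hc) r hr hle
    · exact mem_insert_of_mem (hI.2 z hz r hr hrz)

section Turns

open LatticePath

variable {σ} {I : Finset (ℕ × ℕ)}

lemma isENTurn_region_iff_canToggleOut (hI : σ.IsIdeal I) {p : ℕ × ℕ} (hp : p ∈ σ.cells) :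
    IsENTurn (σ.region I) p ↔ σ.CanToggleOut I p := by
  have hpc := σ.mem_cells.mp hp
  have hν := σ.nu_anti p.1 (p.1 + 1) hpc.1 (by omega)
  rw [σ.canToggleOut_iff hI, IsENTurn, σ.mem_region_iff_mem_of_mem_cells hI hp,
    σ.mem_region_iff_mem hI (t := (p.1 + 1, p.2)) (by simp) (fun h => by dsimp only at h ⊢; omega),
    σ.mem_region_iff_mem hI (t := (p.1, p.2 + 1)) hpc.1 (fun _ => by dsimp only; omega)]
  exact and_congr_right (σ.maximal_iff hI · |>.symm)

lemma isNETurn_region_iff_canToggleIn (hI : σ.IsIdeal I) {x y : ℕ}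
    (hq : (x + 1, y + 1) ∈ σ.cells) :
    IsNETurn (σ.region I) (x, y) ↔ σ.CanToggleIn I (x + 1, y + 1) := by
  have hqc := σ.mem_cells.mp hq
  dsimp only at hqc
  have hlam : x = 0 ∨ y + 1 ≤ σ.lam x := by
    rcases Nat.eq_zero_or_pos x with h | h
    · exact Or.inl h
    · exact Or.inr (hqc.2.2.2.2.2.trans (σ.lam_anti x (x + 1) h (by omega) hqc.2.1))
  rw [σ.canToggleIn_iff hI hq, IsNETurn]
  dsimp only
  rw [σ.mem_region_iff_imp (t := (x + 1, y)) hqc.2.1 (by dsimp only; omega)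
      (Or.inr (by dsimp only; omega)),
    σ.mem_region_iff_imp (t := (x, y + 1)) (by dsimp only; omega) hqc.2.2.2.1 hlam,
    σ.mem_region_iff_mem hI (t := (x + 1, y + 1)) hqc.1 (fun _ => hqc.2.2.2.2.1)]
  tauto

lemma isENTurn_region_iff_nwInPath (hI : σ.IsIdeal I) {c : ℕ × ℕ} (hc : σ.IsNWCorner c) :
    IsENTurn (σ.region I) c ↔ NWInPath c I := by
  obtain ⟨h1, h2, h3⟩ := hc
  have m1 := σ.mem_cells.mp h1
  have m2 := σ.mem_cells.mp h2
  dsimp only at m1 m2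
  have hcR : c ∈ σ.region I :=
    (σ.mem_region_iff_imp (by omega) (by omega) (Or.inr (by omega))).mpr (absurd · h3)
  rw [IsENTurn, NWInPath, σ.mem_region_iff_mem_of_mem_cells hI h1,
    σ.mem_region_iff_mem_of_mem_cells hI h2]
  exact ⟨fun h => h.2, fun h => ⟨hcR, h⟩⟩

lemma isNETurn_region_iff_seInPath (hI : σ.IsIdeal I) {c : ℕ × ℕ} (hc : σ.IsSECorner c) :
    IsNETurn (σ.region I) c ↔ SEInPath c I := by
  obtain ⟨h1, h2, h3⟩ := hc
  have m1 := σ.mem_cells.mp h1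
  dsimp only at m1
  have hcR : (c.1 + 1, c.2 + 1) ∉ σ.region I := by
    rw [σ.mem_region_iff_mem hI (by simp) (fun _ => by dsimp only; omega)]
    exact fun h => h3 (hI.1 h)
  rw [IsNETurn, SEInPath, σ.mem_region_iff_mem_of_mem_cells hI h1,
    σ.mem_region_iff_mem_of_mem_cells hI h2]
  exact ⟨fun h => ⟨h.1, h.2.1⟩, fun h => ⟨h.1, h.2, hcR⟩⟩

lemma eq_endpoint_of_isENTurn_region (hconn : σ.Connected) (hI : σ.IsIdeal I) {t : ℕ × ℕ}
    (hen : IsENTurn (σ.region I) t) (hcells : t ∉ σ.cells) (hnw : ¬ σ.IsNWCorner t) :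
    t = (σ.a, 0) ∨ t = (0, σ.b) := by
  obtain ⟨ht, hA, hB⟩ := hen
  rw [mem_region] at ht hA hB
  obtain ⟨x, y⟩ := t
  dsimp only at ht hA hB ⊢
  simp only [Prod.mk.injEq]
  by_cases hx : x = 0
  · omega
  by_cases hy : y = 0
  · omega
  have hyν : y ≤ σ.nu x := by
    rcases ht.2.2 with h | h | h | h
    · omega
    · omega
    · exact h
    · exact absurd (hI.1 h) hcells
  have hnl := σ.nu_lt_lam x (by omega) ht.1
  have hlb := σ.lam_le_b x (by omega) ht.1
  have hyx : y = σ.nu x := by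
    by_contra
    exact hB ⟨ht.1, by omega, Or.inr (Or.inr (Or.inl (by omega)))⟩
  have hxa : x + 1 ≤ σ.a := by
    by_contra
    have hνa := σ.nu_a
    rw [show σ.a = x by omega] at hνa
    omega
  have hν1 : σ.nu (x + 1) < y := by
    by_contra
    exact hA ⟨hxa, ht.2.1, Or.inr (Or.inr (Or.inl (by omega)))⟩
  have := σ.nu_lt_lam_succ hconn (by omega) hxa
  exact absurd ⟨σ.mem_cells.mpr (by dsimp only; omega), σ.mem_cells.mpr (by dsimp only; omega),
    hcells⟩ hnw

lemma isSECorner_of_isNETurn_region (hconn : σ.Connected) (hI : σ.IsIdeal I) {t : ℕ × ℕ}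
    (hne : IsNETurn (σ.region I) t) (hq : (t.1 + 1, t.2 + 1) ∉ σ.cells) :
    σ.IsSECorner t ∧ SEInPath t I := by
  obtain ⟨h1, h2, h3⟩ := hne
  obtain ⟨x, y⟩ := t
  rw [mem_region] at h1 h2 h3
  rw [mem_cells] at hq
  dsimp only at h1 h2 h3 hq ⊢
  have hnl := σ.nu_lt_lam (x + 1) (by omega) h1.1
  have hlq : σ.lam (x + 1) ≤ y := by
    by_contra
    exact h3 ⟨h1.1, h2.2.1, Or.inr (Or.inr (Or.inl (by by_contra; exact hq (by omega))))⟩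
  have hl : (x + 1, y) ∈ I := by
    rcases h1.2.2 with h | h | h | h
    · omega
    · omega
    · omega
    · exact h
  have hx : 1 ≤ x := by
    by_contra
    obtain rfl : x = 0 := by omega
    rw [zero_add, σ.lam_one] at hlq
    omega
  have hu : (x, y + 1) ∈ I := by
    have := σ.nu_lt_lam_succ hconn hx h1.1
    rcases h2.2.2 with h | h | h | h
    · omega
    · omega
    · omega
    · exact h
  exact ⟨⟨hI.1 hl, hI.1 hu, fun h => hq (σ.mem_cells.mp h)⟩, hl, hu⟩

lemma sum_potential_isENTurn_region (hconn : σ.Connected) (hI : σ.IsIdeal I) :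
    ∑ t ∈ range (σ.a + 1) ×ˢ range (σ.b + 1),
        σ.potential t * (if IsENTurn (σ.region I) t then 1 else 0) =
      ∑ p ∈ σ.cells, σ.potential p * (if σ.CanToggleOut I p then 1 else 0) +
        ∑ c ∈ σ.nwCorners, σ.potential c * (if NWInPath c I then 1 else 0) := by
  have hdisj : Disjoint σ.cells σ.nwCorners :=
    disjoint_left.mpr fun p hp hnw => (mem_filter.mp hnw).2.2.2 hp
  rw [← sum_subset (union_subset σ.cells_subset_grid fun c (hc : c ∈ σ.nwCorners) =>
      (mem_filter.mp hc).1),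
    sum_union hdisj]
  · congr 1
    · refine sum_congr rfl fun p hp => ?_
      rw [if_congr (isENTurn_region_iff_canToggleOut hI hp) rfl rfl]
    · refine sum_congr rfl fun c hc => ?_
      rw [if_congr (isENTurn_region_iff_nwInPath hI (mem_filter.mp hc).2) rfl rfl]
  · intro t ht htu
    by_cases hen : IsENTurn (σ.region I) t
    · have hnw : ¬ σ.IsNWCorner t := fun h => htu (mem_union_right _ (mem_filter.mpr ⟨ht, h⟩))
      rcases eq_endpoint_of_isENTurn_region hconn hI hen (fun h => htu (mem_union_left _ h)) hnw
        with rfl | rfl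
      · rw [σ.potential_a_zero, zero_mul]
      · rw [σ.potential_zero_b, zero_mul]
    · rw [if_neg hen, mul_zero]

lemma sum_potential_isNETurn_region (hconn : σ.Connected) (hI : σ.IsIdeal I) :
    ∑ t ∈ range (σ.a + 1) ×ˢ range (σ.b + 1),
        σ.potential t * (if IsNETurn (σ.region I) t then 1 else 0) =
      ∑ q ∈ σ.cells, (σ.potential q - (1 / σ.a + 1 / σ.b)) *
          (if σ.CanToggleIn I q then 1 else 0) +
        ∑ c ∈ σ.seCorners, σ.potential c * (if SEInPath c I then 1 else 0) := by
  rw [← sum_filter_add_sum_filter_not _ (fun t : ℕ × ℕ => (t.1 + 1, t.2 + 1) ∈ σ.cells)]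
  congr 1
  · refine sum_nbij' (fun t => (t.1 + 1, t.2 + 1)) (fun q => (q.1 - 1, q.2 - 1))
      (fun t ht => (mem_filter.mp ht).2) (fun q hq => ?_) (fun t _ => by simp)
      (fun q hq => ?_) (fun t ht => ?_)
    · have := σ.mem_cells.mp hq
      simp only [mem_filter, mem_product, mem_range]
      refine ⟨by omega, ?_⟩
      rwa [Nat.sub_add_cancel (by omega), Nat.sub_add_cancel (by omega)]
    · have := σ.mem_cells.mp hq
      ext <;> dsimp only <;> omega
    · rw [if_congr (isNETurn_region_iff_canToggleIn hI (mem_filter.mp ht).2) rfl rfl,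
        σ.potential_succ_succ, add_sub_cancel_right]
  · refine (sum_subset (fun c hc => ?_) fun t ht hse => ?_).symm.trans
      (sum_congr rfl fun c hc => ?_)
    · have hc' := mem_filter.mp hc
      exact mem_filter.mpr ⟨hc'.1, hc'.2.2.2⟩
    · by_cases hne : IsNETurn (σ.region I) t
      · have hne' := (mem_filter.mp ht).2
        exact absurd (mem_filter.mpr ⟨(mem_filter.mp ht).1,
          (isSECorner_of_isNETurn_region hconn hI hne hne').1⟩) hse
      · rw [if_neg hne, mul_zero]
    · rw [if_congr (isNETurn_region_iff_seInPath hI (mem_filter.mp hc).2) rfl rfl]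

end Turns

lemma antichainCard_eq_sum {I : Finset (ℕ × ℕ)} (hI : σ.IsIdeal I) :
    (antichainCard I : ℝ) = ∑ p ∈ σ.cells, if σ.CanToggleOut I p then 1 else 0 := by
  have hmax : (I.filter fun p => ∀ q ∈ I, p ≤ q → q = p) = σ.cells.filter (σ.CanToggleOut I) := by
    ext p
    simp only [mem_filter, σ.canToggleOut_iff hI]
    exact ⟨fun h => ⟨hI.1 h.1, h⟩, fun h => h.2⟩
  rw [sum_boole, antichainCard, hmax]

def cornerSum (I : Finset (ℕ × ℕ)) : ℝ :=
  ∑ c ∈ σ.nwCorners, σ.nwDisp c * (if NWInPath c I then 1 else 0) +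
    ∑ c ∈ σ.seCorners, σ.seDisp c * (if SEInPath c I then 1 else 0)

/-- The turn sum of the region of `I`, read off box by box and corner by corner. -/
theorem antichainCard_balance (hconn : σ.Connected) {I : Finset (ℕ × ℕ)} (hI : σ.IsIdeal I) :
    (1 / σ.a + 1 / σ.b) * (antichainCard I : ℝ) +
        ∑ p ∈ σ.cells, (σ.potential p - (1 / σ.a + 1 / σ.b)) *
          ((if σ.CanToggleOut I p then 1 else 0) - (if σ.CanToggleIn I p then 1 else 0)) =
      1 + σ.cornerSum I := by
  have hturn := σ.turnSum_region hI
  simp only [LatticePath.turnSum, mul_sub, sum_sub_distrib] at hturn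
  rw [sum_potential_isENTurn_region hconn hI, sum_potential_isNETurn_region hconn hI] at hturn
  have hcells : (1 / σ.a + 1 / σ.b) * (antichainCard I : ℝ) +
        ∑ p ∈ σ.cells, (σ.potential p - (1 / σ.a + 1 / σ.b)) *
          ((if σ.CanToggleOut I p then 1 else 0) - (if σ.CanToggleIn I p then 1 else 0)) =
      ∑ p ∈ σ.cells, σ.potential p * (if σ.CanToggleOut I p then 1 else 0) -
        ∑ p ∈ σ.cells, (σ.potential p - (1 / σ.a + 1 / σ.b)) *
          (if σ.CanToggleIn I p then 1 else 0) := by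
    rw [σ.antichainCard_eq_sum hI, mul_sum, ← sum_add_distrib, ← sum_sub_distrib]
    exact sum_congr rfl fun p _ => by ring
  have hnw : ∑ c ∈ σ.nwCorners, σ.nwDisp c * (if NWInPath c I then 1 else 0) =
      -∑ c ∈ σ.nwCorners, σ.potential c * (if NWInPath c I then 1 else 0) := by
    rw [← sum_neg_distrib]
    exact sum_congr rfl fun c _ => by simp only [nwDisp, potential]; ring
  have hse : ∑ c ∈ σ.seCorners, σ.seDisp c * (if SEInPath c I then 1 else 0) =
      ∑ c ∈ σ.seCorners, σ.potential c * (if SEInPath c I then 1 else 0) :=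
    sum_congr rfl fun c _ => by simp only [seDisp, potential]; ring
  rw [hcells, cornerSum, hnw, hse]
  linarith

section Expectation

variable (μ : Finset (ℕ × ℕ) → ℝ)

lemma expect_congr {f g : Finset (ℕ × ℕ) → ℝ} (h : ∀ I ∈ σ.idealsFinset, f I = g I) :
    σ.expect μ f = σ.expect μ g :=
  sum_congr rfl fun I hI => by rw [h I hI]

lemma expect_add (f g : Finset (ℕ × ℕ) → ℝ) :
    σ.expect μ (fun I => f I + g I) = σ.expect μ f + σ.expect μ g := by
  simp only [expect, mul_add, sum_add_distrib]

lemma expect_sub (f g : Finset (ℕ × ℕ) → ℝ) :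
    σ.expect μ (fun I => f I - g I) = σ.expect μ f - σ.expect μ g := by
  simp only [expect, mul_sub, sum_sub_distrib]

lemma expect_const_mul (c : ℝ) (f : Finset (ℕ × ℕ) → ℝ) :
    σ.expect μ (fun I => c * f I) = c * σ.expect μ f := by
  simp only [expect, mul_sum]
  exact sum_congr rfl fun I _ => by ring

lemma expect_sum {ι : Type*} (s : Finset ι) (f : ι → Finset (ℕ × ℕ) → ℝ) :
    σ.expect μ (fun I => ∑ i ∈ s, f i I) = ∑ i ∈ s, σ.expect μ (f i) := by
  simp only [expect, mul_sum]
  exact sum_comm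

lemma expect_const (hμ : ∑ I ∈ σ.idealsFinset, μ I = 1) (c : ℝ) :
    σ.expect μ (fun _ => c) = c := by
  rw [expect, ← sum_mul, hμ, one_mul]

lemma expect_indicator (E : Finset (ℕ × ℕ) → Prop) :
    σ.expect μ (fun I => if E I then 1 else 0) = σ.pr μ E := by
  simp only [expect, pr, mul_ite, mul_one, mul_zero, sum_filter]

lemma expect_cornerSum : σ.expect μ σ.cornerSum = σ.cornerCorrection μ := by
  change σ.expect μ (fun I => σ.cornerSum I) = _
  simp only [cornerSum, expect_add, expect_sum, expect_const_mul, expect_indicator,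
    cornerCorrection]

lemma expect_sum_toggle_eq_zero (hts : σ.ToggleSymmetric μ) (w : ℕ × ℕ → ℝ) :
    σ.expect μ (fun I => ∑ p ∈ σ.cells, w p *
      ((if σ.CanToggleOut I p then 1 else 0) - (if σ.CanToggleIn I p then 1 else 0))) = 0 := by
  rw [expect_sum]
  refine sum_eq_zero fun p hp => ?_
  rw [expect_const_mul, expect_sub, expect_indicator, expect_indicator, hts p hp, sub_self,
    mul_zero]

end Expectation

end SkewShape

/-- Corollary 3.12: for a connected skew shape `σ` with height `a` and
width `b` and any toggle-symmetric probability distribution `μ` on `J(σ)`, the expected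
cardinality of the antichain of maximal elements of a `μ`-random order ideal is
`(ab/(a+b)) · (1 + Σ_{c ∈ C(σ)} δ(c) · P_μ(c))`. -/
theorem SkewShape.expected_antichain_card (σ : SkewShape) (hconn : σ.Connected)
    (μ : Finset (ℕ × ℕ) → ℝ) (hμ : σ.IsProbDist μ) (hts : σ.ToggleSymmetric μ) :
    σ.expect μ (fun I => (SkewShape.antichainCard I : ℝ)) =
      (σ.a : ℝ) * (σ.b : ℝ) / ((σ.a : ℝ) + (σ.b : ℝ)) * (1 + σ.cornerCorrection μ) := by
  have key := σ.expect_congr μ fun I hI => σ.antichainCard_balance hconn (σ.mem_idealsFinset.mp hI)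
  rw [σ.expect_add, σ.expect_const_mul, σ.expect_sum_toggle_eq_zero μ hts, σ.expect_add,
    σ.expect_const μ hμ.2, σ.expect_cornerSum, add_zero] at key
  have ha : (0 : ℝ) < σ.a := Nat.cast_pos.mpr σ.ha
  have hb : (0 : ℝ) < σ.b := Nat.cast_pos.mpr σ.hb
  rw [← key]
  field_simp
  ring
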